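/- Soundness of HFTA construction on terms (Lemma A.2): Let t be a ground term in which every function symbol f_1,…,f_n occurs exactly once, and suppose G, M ⊢ t ↝ H by the HFTA construction rules. Then for every hierarchical tree T = (V, Υ, v_r, E) accepted by H: (1) each Υ(v_{f_i}) is a program that conforms to grammar G(M⁻¹(f_i)); and (2) the accepting run of Υ(v_r) on the root FTA Ω(v_r) labels its root with the final state q_s^{⟦t⟧}, where ⟦t⟧ is the value of t when each f_i is interpreted as Υ(v_{f_i}). -/

import Mathlib

namespace Relish

/-- Alphabet symbols for program and specification trees: DSL constructs,
variables `xᵢ`, constants, binary (relational/logical) operators, and negation. -/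
inductive Alpha (op val bop : Type) : Type where
  | dsl : op → Alpha op val bop
  | var : ℕ → Alpha op val bop
  | cst : val → Alpha op val bop
  | lop : bop → Alpha op val bop
  | neg : Alpha op val bop

/-- Finite trees (terms) over an alphabet. -/
inductive Tree (α : Type) : Type where
  | node : α → List (Tree α) → Tree α

/-- Bottom-up finite tree automaton: states, final states, and transitions
`σ(q₁, …, qₙ) → q`. -/
structure FTA (α Q : Type) : Type where
  states : Set Q
  finals : Set Q
  trans : Set (α × List Q × Q)

/-- A run of an FTA on a tree reaching state `q`, in which every variable leaf
`var i` is assigned the state `leaf i`. -/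
inductive RunFrom {op val bop Q : Type} (A : FTA (Alpha op val bop) Q) (leaf : ℕ → Q) :
    Tree (Alpha op val bop) → Q → Prop where
  | node (a : Alpha op val bop) (ts : List (Tree (Alpha op val bop))) (qs : List Q) (q : Q) :
      (a, qs, q) ∈ A.trans →
      (∀ i : ℕ, a = Alpha.var i → q = leaf i) →
      ts.length = qs.length →
      (∀ p ∈ ts.zip qs, RunFrom A leaf p.1 p.2) →
      RunFrom A leaf (Tree.node a ts) q

/-- Symbols labeling FTA states: grammar nonterminals, variables `xᵢ`, or the
special start/constant symbol `s₀`. -/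
inductive SymT (ν : Type) : Type where
  | nt : ν → SymT ν
  | var : ℕ → SymT ν
  | start : SymT ν

/-- A context-free grammar: productions `s → σ(s₁, …, sₙ)` and a start symbol. -/
structure Grammar (op ν : Type) : Type where
  prods : Set (ν × op × List (SymT ν))
  start : ν

/-- Derivation of a tree from a grammar symbol. -/
inductive Derives {op val bop ν : Type} (G : Grammar op ν) :
    SymT ν → Tree (Alpha op val bop) → Prop where
  | var (i : ℕ) : Derives G (SymT.var i) (Tree.node (Alpha.var i) [])
  | prod (s : ν) (o : op) (ss : List (SymT ν)) (ts : List (Tree (Alpha op val bop))) :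
      (s, o, ss) ∈ G.prods →
      ss.length = ts.length →
      (∀ p ∈ ss.zip ts, Derives G p.1 p.2) →
      Derives G (SymT.nt s) (Tree.node (Alpha.dsl o) ts)

/-- A program (tree) conforms to grammar `G` if it is derivable from the start symbol. -/
def ConformsTo {op val bop ν : Type} (G : Grammar op ν) (t : Tree (Alpha op val bop)) : Prop :=
  Derives G (SymT.nt G.start) t

/-- Evaluation of a program tree under DSL semantics `sem`, binary operator
semantics `bsem`, negation semantics `nsem`, and argument assignment `args`. -/
inductive EvalsTo {op val bop : Type} (sem : op → List val → val)
    (bsem : bop → val → val → val) (nsem : val → val) (args : ℕ → val) :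
    Tree (Alpha op val bop) → val → Prop where
  | var (i : ℕ) : EvalsTo sem bsem nsem args (Tree.node (Alpha.var i) []) (args i)
  | cst (c : val) : EvalsTo sem bsem nsem args (Tree.node (Alpha.cst c) []) c
  | dsl (o : op) (ts : List (Tree (Alpha op val bop))) (cs : List val) :
      ts.length = cs.length →
      (∀ p ∈ ts.zip cs, EvalsTo sem bsem nsem args p.1 p.2) →
      EvalsTo sem bsem nsem args (Tree.node (Alpha.dsl o) ts) (sem o cs)
  | lop (b : bop) (t₁ t₂ : Tree (Alpha op val bop)) (c₁ c₂ : val) :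
      EvalsTo sem bsem nsem args t₁ c₁ →
      EvalsTo sem bsem nsem args t₂ c₂ →
      EvalsTo sem bsem nsem args (Tree.node (Alpha.lop b) [t₁, t₂]) (bsem b c₁ c₂)
  | neg (t : Tree (Alpha op val bop)) (c : val) :
      EvalsTo sem bsem nsem args t c →
      EvalsTo sem bsem nsem args (Tree.node Alpha.neg [t]) (nsem c)

/-- States of `BuildFTA(G, [Q₁, …, Qₘ])`, generated by the Input and Prod rules;
`init i` is the set of values of the i-th initial state set `Qᵢ`. -/
inductive BStates {op val ν : Type} (G : Grammar op ν) (sem : op → List val → val)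
    (arity : ℕ) (init : ℕ → Set val) : SymT ν × val → Prop where
  | input (i : ℕ) (c : val) : i < arity → c ∈ init i →
      BStates G sem arity init (SymT.var i, c)
  | prod (s : ν) (o : op) (ss : List (SymT ν)) (cs : List val) :
      (s, o, ss) ∈ G.prods →
      ss.length = cs.length →
      (∀ p ∈ ss.zip cs, BStates G sem arity init p) →
      BStates G sem arity init (SymT.nt s, sem o cs)

/-- Transitions of `BuildFTA(G, [Q₁, …, Qₘ])` (Input and Prod rules). -/
inductive BTrans {op val ν : Type} (bop : Type) (G : Grammar op ν) (sem : op → List val → val)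
    (arity : ℕ) (init : ℕ → Set val) :
    Alpha op val bop × List (SymT ν × val) × (SymT ν × val) → Prop where
  | input (i : ℕ) (c : val) : i < arity → c ∈ init i →
      BTrans bop G sem arity init (Alpha.var i, [], (SymT.var i, c))
  | prod (s : ν) (o : op) (ss : List (SymT ν)) (cs : List val) :
      (s, o, ss) ∈ G.prods →
      ss.length = cs.length →
      (∀ p ∈ ss.zip cs, BStates G sem arity init p) →
      BTrans bop G sem arity init (Alpha.dsl o, ss.zip cs, (SymT.nt s, sem o cs))

/-- The FTA produced by the `BuildFTA` procedure: final states are all states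
`q_{s₀}^c` where `s₀` is the start symbol of the grammar (Output rule). -/
def buildFTA {op val ν : Type} (bop : Type) (G : Grammar op ν) (sem : op → List val → val)
    (arity : ℕ) (init : ℕ → Set val) : FTA (Alpha op val bop) (SymT ν × val) where
  states := {q | BStates G sem arity init q}
  finals := {q | BStates G sem arity init q ∧ q.1 = SymT.nt G.start}
  trans := {t | BTrans bop G sem arity init t}

/-- Hierarchical finite tree automaton; nodes are tree positions (the root is `[]`). -/
structure HFTA (α Q : Type) : Type where
  nodes : Set (List ℕ)
  fta : List ℕ → FTA α Q
  children : List ℕ → List (List ℕ)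
  inter : Set (Q × Q)

/-- Acceptance of a hierarchical tree `T` by an HFTA `H`, witnessed by root
states `ρ` and input-state assignments `leaf`: every node's term has an
accepting run, and for every edge from `v` to its i-th child `v'`, the final
state at the root of the run on `T v'` is related by the inter-FTA transitions
to the input state used for `xᵢ` in the run on `T v`. -/
def HAcceptWith {op val bop Q : Type} (H : HFTA (Alpha op val bop) Q)
    (T : List ℕ → Tree (Alpha op val bop)) (ρ : List ℕ → Q) (leaf : List ℕ → ℕ → Q) : Prop :=
  ∀ v ∈ H.nodes,
    ρ v ∈ (H.fta v).finals ∧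
    RunFrom (H.fta v) (leaf v) (T v) (ρ v) ∧
    ∀ (i : ℕ) (v' : List ℕ), (H.children v)[i]? = some v' → (ρ v', leaf v i) ∈ H.inter

/-- A hierarchical tree is accepted by an HFTA if some witnesses exist. -/
def HAccepts {op val bop Q : Type} (H : HFTA (Alpha op val bop) Q)
    (T : List ℕ → Tree (Alpha op val bop)) : Prop :=
  ∃ ρ leaf, HAcceptWith H T ρ leaf

/-- States of the FTAs inside a constructed HFTA: a node position paired with an
FTA state `q_s^c`. -/
abbrev TQ (ν val : Type) : Type := List ℕ × SymT ν × val

def emptyFTA {α Q : Type} : FTA α Q := ⟨∅, ∅, ∅⟩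

def mapFTA {α Q Q' : Type} (g : Q → Q') (A : FTA α Q) : FTA α Q' where
  states := g '' A.states
  finals := g '' A.finals
  trans := {t | ∃ a qs q, (a, qs, q) ∈ A.trans ∧ t = (a, qs.map g, g q)}

def tagState {ν val : Type} (i : ℕ) (q : TQ ν val) : TQ ν val := (i :: q.1, q.2)

/-- The values carried by the final states of the root FTA of an HFTA. -/
def rootVals {α ν val : Type} (H : HFTA α (TQ ν val)) : Set val :=
  {c | ∃ q ∈ (H.fta []).finals, q.2.2 = c}

/-- Combine a root FTA `A` with a list of children HFTAs, adding inter-FTA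
transitions from each final state `q_s^c` of a child's root FTA to the input
state `q_{xᵢ}^c` of the root FTA. -/
def combine {α ν val : Type} (A : FTA α (SymT ν × val)) (Hs : List (HFTA α (TQ ν val))) :
    HFTA α (TQ ν val) where
  nodes := {v | v = [] ∨ ∃ i H v', Hs[i]? = some H ∧ v' ∈ H.nodes ∧ v = i :: v'}
  fta := fun v =>
    match v with
    | [] => mapFTA (fun q => (([] : List ℕ), q)) A
    | i :: v' =>
      match Hs[i]? with
      | some H => mapFTA (tagState i) (H.fta v')
      | none => emptyFTA
  children := fun v =>
    match v with
    | [] => (List.range Hs.length).map (fun i => [i])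
    | i :: v' =>
      match Hs[i]? with
      | some H => (H.children v').map (i :: ·)
      | none => []
  inter :=
    {e | ∃ i H q q', Hs[i]? = some H ∧ (q, q') ∈ H.inter ∧ e = (tagState i q, tagState i q')} ∪
    {e | ∃ i H q, Hs[i]? = some H ∧ q ∈ (H.fta []).finals ∧
        e = (tagState i q, (([] : List ℕ), (SymT.var i, q.2.2)))}

/-- FTA for a constant node (Const rule): accepts only the constant `c`. -/
def constFTA {op val ν : Type} (bop : Type) (c : val) :
    FTA (Alpha op val bop) (SymT ν × val) where
  states := {(SymT.start, c)}
  finals := {(SymT.start, c)}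
  trans := {(Alpha.cst c, [], (SymT.start, c))}

/-- FTA for a binary relational/logical operator node (Logical rule). -/
def logicFTA {op val bop ν : Type} (vtrue vfalse : val) (bsem : bop → val → val → val)
    (b : bop) (C₁ C₂ : Set val) : FTA (Alpha op val bop) (SymT ν × val) where
  states := {q | ∃ c ∈ C₁, q = (SymT.var 0, c)} ∪ {q | ∃ c ∈ C₂, q = (SymT.var 1, c)} ∪
      {(SymT.start, vtrue), (SymT.start, vfalse)}
  finals := {(SymT.start, vtrue), (SymT.start, vfalse)}
  trans := {t | ∃ c ∈ C₁, t = (Alpha.var 0, [], (SymT.var 0, c))} ∪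
      {t | ∃ c ∈ C₂, t = (Alpha.var 1, [], (SymT.var 1, c))} ∪
      {t | ∃ c₁ ∈ C₁, ∃ c₂ ∈ C₂,
          t = (Alpha.lop b, [(SymT.var 0, c₁), (SymT.var 1, c₂)], (SymT.start, bsem b c₁ c₂))}

/-- FTA for a negation node (Neg rule). -/
def negFTA {op val bop ν : Type} (vtrue vfalse : val) (nsem : val → val) (C : Set val) :
    FTA (Alpha op val bop) (SymT ν × val) where
  states := {q | ∃ c ∈ C, q = (SymT.var 0, c)} ∪ {(SymT.start, vtrue), (SymT.start, vfalse)}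
  finals := {(SymT.start, vtrue), (SymT.start, vfalse)}
  trans := {t | ∃ c ∈ C, t = (Alpha.var 0, [], (SymT.var 0, c))} ∪
      {t | ∃ c ∈ C, t = (Alpha.neg, [(SymT.var 0, c)], (SymT.start, nsem c))}

/-- Initial value sets obtained from the final states of children root FTAs. -/
def initsOf {α ν val : Type} (Hs : List (HFTA α (TQ ν val))) : ℕ → Set val :=
  fun i =>
    match Hs[i]? with
    | some H => rootVals H
    | none => ∅

/-- Ground specifications `ψ`: constants, applications of function symbols,
binary relational/logical operators, and negation.  A ground specification in
which the topmost constructor is `bin` or `neg` is a formula; one built only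
from `cst`/`app` is a term. -/
inductive GS (F val bop : Type) : Type where
  | cst : val → GS F val bop
  | app : F → List (GS F val bop) → GS F val bop
  | bin : bop → GS F val bop → GS F val bop → GS F val bop
  | neg : GS F val bop → GS F val bop

/-- `ψ` is a term (no logical structure). -/
inductive IsTerm {F val bop : Type} : GS F val bop → Prop where
  | cst (c : val) : IsTerm (GS.cst c)
  | app (f : F) (ts : List (GS F val bop)) : (∀ t ∈ ts, IsTerm t) → IsTerm (GS.app f ts)

/-- `ψ` is a formula. -/
inductive IsForm {F val bop : Type} : GS F val bop → Prop where
  | bin (b : bop) (ψ₁ ψ₂ : GS F val bop) : IsForm (GS.bin b ψ₁ ψ₂)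
  | neg (ψ : GS F val bop) : IsForm ψ → IsForm (GS.neg ψ)

/-- Function symbol `g` occurs at position `p` in a ground specification. -/
inductive OccursAt {F val bop : Type} : GS F val bop → F → List ℕ → Prop where
  | here (f : F) (ts : List (GS F val bop)) : OccursAt (GS.app f ts) f []
  | app (f g : F) (ts : List (GS F val bop)) (i : ℕ) (t : GS F val bop) (p : List ℕ) :
      ts[i]? = some t → OccursAt t g p → OccursAt (GS.app f ts) g (i :: p)
  | binl (b : bop) (ψ₁ ψ₂ : GS F val bop) (g : F) (p : List ℕ) :
      OccursAt ψ₁ g p → OccursAt (GS.bin b ψ₁ ψ₂) g (0 :: p)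
  | binr (b : bop) (ψ₁ ψ₂ : GS F val bop) (g : F) (p : List ℕ) :
      OccursAt ψ₂ g p → OccursAt (GS.bin b ψ₁ ψ₂) g (1 :: p)
  | neg (ψ : GS F val bop) (g : F) (p : List ℕ) :
      OccursAt ψ g p → OccursAt (GS.neg ψ) g (0 :: p)

/-- Every function symbol occurs (at most) once in the ground specification. -/
def OccursOnce {F val bop : Type} (Φ : GS F val bop) : Prop :=
  ∀ (g : F) (p₁ p₂ : List ℕ), OccursAt Φ g p₁ → OccursAt Φ g p₂ → p₁ = p₂

/-- Evaluation of a ground specification under an interpretation `I` assigning a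
program to every function symbol. -/
inductive SpecEval {op val bop F : Type} [Inhabited val] (sem : op → List val → val)
    (bsem : bop → val → val → val) (nsem : val → val)
    (I : F → Tree (Alpha op val bop)) : GS F val bop → val → Prop where
  | cst (c : val) : SpecEval sem bsem nsem I (GS.cst c) c
  | app (f : F) (ts : List (GS F val bop)) (cs : List val) (c : val) :
      ts.length = cs.length →
      (∀ p ∈ ts.zip cs, SpecEval sem bsem nsem I p.1 p.2) →
      EvalsTo sem bsem nsem (fun i => cs.getD i default) (I f) c →
      SpecEval sem bsem nsem I (GS.app f ts) c
  | bin (b : bop) (ψ₁ ψ₂ : GS F val bop) (c₁ c₂ : val) :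
      SpecEval sem bsem nsem I ψ₁ c₁ →
      SpecEval sem bsem nsem I ψ₂ c₂ →
      SpecEval sem bsem nsem I (GS.bin b ψ₁ ψ₂) (bsem b c₁ c₂)
  | neg (ψ : GS F val bop) (c : val) :
      SpecEval sem bsem nsem I ψ c →
      SpecEval sem bsem nsem I (GS.neg ψ) (nsem c)

/-- `I ⊨ Φ`: the ground specification evaluates to true under interpretation `I`. -/
def Satisfies {op val bop F : Type} [Inhabited val] (sem : op → List val → val)
    (bsem : bop → val → val → val) (nsem : val → val) (vtrue : val)
    (I : F → Tree (Alpha op val bop)) (Φ : GS F val bop) : Prop :=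
  SpecEval sem bsem nsem I Φ vtrue

/-- HFTA construction judgment `𝒢, ℳ ⊢ ψ ↝ ℋ` (rules Const, Func, Logical, Neg).
`gram f` is the grammar `𝒢(ℳ⁻¹(f))` associated with occurrence symbol `f`. -/
inductive BuildsH {op val bop ν F : Type} (gram : F → Grammar op ν)
    (sem : op → List val → val) (bsem : bop → val → val → val) (nsem : val → val)
    (vtrue vfalse : val) : GS F val bop → HFTA (Alpha op val bop) (TQ ν val) → Prop where
  | cst (c : val) :
      BuildsH gram sem bsem nsem vtrue vfalse (GS.cst c) (combine (constFTA bop c) [])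
  | app (f : F) (ts : List (GS F val bop)) (Hs : List (HFTA (Alpha op val bop) (TQ ν val))) :
      ts.length = Hs.length →
      (∀ p ∈ ts.zip Hs, BuildsH gram sem bsem nsem vtrue vfalse p.1 p.2) →
      BuildsH gram sem bsem nsem vtrue vfalse (GS.app f ts)
        (combine (buildFTA bop (gram f) sem ts.length (initsOf Hs)) Hs)
  | bin (b : bop) (ψ₁ ψ₂ : GS F val bop) (H₁ H₂ : HFTA (Alpha op val bop) (TQ ν val)) :
      BuildsH gram sem bsem nsem vtrue vfalse ψ₁ H₁ →
      BuildsH gram sem bsem nsem vtrue vfalse ψ₂ H₂ →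
      BuildsH gram sem bsem nsem vtrue vfalse (GS.bin b ψ₁ ψ₂)
        (combine (logicFTA vtrue vfalse bsem b (rootVals H₁) (rootVals H₂)) [H₁, H₂])
  | neg (ψ : GS F val bop) (H₁ : HFTA (Alpha op val bop) (TQ ν val)) :
      BuildsH gram sem bsem nsem vtrue vfalse ψ H₁ →
      BuildsH gram sem bsem nsem vtrue vfalse (GS.neg ψ)
        (combine (negFTA vtrue vfalse nsem (rootVals H₁)) [H₁])

/-- The Final rule: restrict the final states of the root node's FTA to `{q_{s₀}^⊤}`. -/
def finalize {α ν val : Type} (vtrue : val) (H : HFTA α (TQ ν val)) :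
    HFTA α (TQ ν val) where
  nodes := H.nodes
  fta := fun v =>
    if v = [] then
      ⟨(H.fta []).states, {q | q ∈ (H.fta []).finals ∧ q.2 = (SymT.start, vtrue)},
        (H.fta []).trans⟩
    else H.fta v
  children := H.children
  inter := H.inter


/-- The final states of `A` reachable by (accepting) runs of `A` on program `p`. -/
def reachFinals {op val bop Q : Type} (A : FTA (Alpha op val bop) Q)
    (p : Tree (Alpha op val bop)) : Set Q :=
  {q | q ∈ A.finals ∧ ∃ leaf, RunFrom A leaf p q}

/-- The `Propagate` procedure (Algorithm 3): for every node `v ∈ W` (the nodes of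
the occurrences of the function being propagated), shrink the final states of
`Ω(v)` to those reachable by runs on the program `p`, and remove every
inter-FTA transition whose source is a final state that was removed. -/
def propagate {op val bop Q : Type} (H : HFTA (Alpha op val bop) Q)
    (p : Tree (Alpha op val bop)) (W : Set (List ℕ)) : HFTA (Alpha op val bop) Q where
  nodes := H.nodes
  fta := fun v =>
    ⟨(H.fta v).states,
      {q | q ∈ (H.fta v).finals ∧ (v ∈ W → q ∈ reachFinals (H.fta v) p)},
      (H.fta v).trans⟩
  children := H.children
  inter := {e | e ∈ H.inter ∧
      ∀ v ∈ W, e.1 ∈ (H.fta v).finals → e.1 ∈ reachFinals (H.fta v) p}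

/-- Relaxation of a ground specification: each occurrence of a function symbol
of `Φ` is replaced by a fresh occurrence symbol; `Mi` maps each occurrence
symbol back to the original symbol (i.e. `Mi = ℳ⁻¹`). -/
inductive Relax {F F₀ val bop : Type} (Mi : F → F₀) :
    GS F₀ val bop → GS F val bop → Prop where
  | cst (c : val) : Relax Mi (GS.cst c) (GS.cst c)
  | app (f : F₀) (f' : F) (ts : List (GS F₀ val bop)) (ts' : List (GS F val bop)) :
      Mi f' = f →
      ts.length = ts'.length →
      (∀ p ∈ ts.zip ts', Relax Mi p.1 p.2) →
      Relax Mi (GS.app f ts) (GS.app f' ts')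
  | bin (b : bop) (ψ₁ ψ₂ : GS F₀ val bop) (ψ₁' ψ₂' : GS F val bop) :
      Relax Mi ψ₁ ψ₁' → Relax Mi ψ₂ ψ₂' →
      Relax Mi (GS.bin b ψ₁ ψ₂) (GS.bin b ψ₁' ψ₂')
  | neg (ψ : GS F₀ val bop) (ψ' : GS F val bop) :
      Relax Mi ψ ψ' → Relax Mi (GS.neg ψ) (GS.neg ψ')

/-- Returning traces of the backtracking procedure `FindProgs` (Algorithm 2).
`occNodes f` is the set of HFTA nodes of the occurrences of the original
function symbol `f`.  `FPRet occNodes H P R` holds iff `FindProgs(H, P, ℳ)` can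
return the total assignment `R`: either all symbols are assigned, or some
unassigned symbol `f` gets a program `p` read off (at the node of one of its
occurrences) from a hierarchical tree accepted by the current HFTA such that
propagating `p` yields an HFTA with non-empty language, and the recursive call
returns `R`. -/
inductive FPRet {op val bop Q F₀ : Type} [DecidableEq F₀]
    (occNodes : F₀ → Set (List ℕ)) :
    HFTA (Alpha op val bop) Q → (F₀ → Option (Tree (Alpha op val bop))) →
    (F₀ → Tree (Alpha op val bop)) → Prop where
  | done (H : HFTA (Alpha op val bop) Q) (P : F₀ → Option (Tree (Alpha op val bop)))
      (R : F₀ → Tree (Alpha op val bop)) :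
      (∀ f, P f = some (R f)) → FPRet occNodes H P R
  | step (H : HFTA (Alpha op val bop) Q) (P : F₀ → Option (Tree (Alpha op val bop)))
      (R : F₀ → Tree (Alpha op val bop)) (f : F₀) (v : List ℕ)
      (p : Tree (Alpha op val bop)) (T : List ℕ → Tree (Alpha op val bop)) :
      P f = none →
      v ∈ occNodes f →
      HAccepts H T →
      T v = p →
      (∃ T', HAccepts (propagate H p (occNodes f)) T') →
      FPRet occNodes (propagate H p (occNodes f)) (Function.update P f (some p)) R →
      FPRet occNodes H P R

/-- The inductive synthesis phase of Algorithm 1 (lines 8--11): relax the ground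
specification `Φ`, build the HFTA for the relaxed specification (rules
Const/Func/Logical/Neg followed by the Final rule), and run `FindProgs` on it
starting from the everywhere-unassigned map, obtaining programs `R`. -/
def InductiveSynth {op val bop ν F₀ : Type} [Inhabited val] [DecidableEq F₀]
    (G : F₀ → Grammar op ν) (sem : op → List val → val) (bsem : bop → val → val → val)
    (nsem : val → val) (vtrue vfalse : val)
    (Φ : GS F₀ val bop) (R : F₀ → Tree (Alpha op val bop)) : Prop :=
  ∃ (F : Type) (Mi : F → F₀) (Φ' : GS F val bop) (H' : HFTA (Alpha op val bop) (TQ ν val)),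
    Relax Mi Φ Φ' ∧ OccursOnce Φ' ∧
    BuildsH (fun f' => G (Mi f')) sem bsem nsem vtrue vfalse Φ' H' ∧
    FPRet (fun f => {v | ∃ f' : F, Mi f' = f ∧ OccursAt Φ' f' v})
      (finalize vtrue H') (fun _ => none) R

/-- Returning traces of the CEGIS loop `Synthesize` (Algorithm 1).
`SynthRet … P Φ R` holds iff, starting from candidate programs `P` and
accumulated ground specification `Φ`, the loop can return the programs `R`:
either the current candidates verify against the relational specification `Ψ`,
or a new relational counterexample `Ψ σ` (an instantiation of the universal
quantifiers of `Ψ` violated by `P`) is conjoined to `Φ` and inductive synthesis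
produces new candidates. -/
inductive SynthRet {op val bop ν F₀ : Type} [Inhabited val] [DecidableEq F₀]
    (G : F₀ → Grammar op ν) (sem : op → List val → val) (bsem : bop → val → val → val)
    (nsem : val → val) (vtrue vfalse : val) (andOp : bop)
    (Ψ : (ℕ → val) → GS F₀ val bop)
    (verify : (F₀ → Tree (Alpha op val bop)) → Prop) :
    (F₀ → Tree (Alpha op val bop)) → GS F₀ val bop → (F₀ → Tree (Alpha op val bop)) → Prop where
  | verified (P : F₀ → Tree (Alpha op val bop)) (Φ : GS F₀ val bop) :
      verify P →
      SynthRet G sem bsem nsem vtrue vfalse andOp Ψ verify P Φ P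
  | refine (P P' R : F₀ → Tree (Alpha op val bop)) (Φ : GS F₀ val bop) (σ : ℕ → val) :
      ¬ verify P →
      ¬ Satisfies sem bsem nsem vtrue P (Ψ σ) →
      InductiveSynth G sem bsem nsem vtrue vfalse (GS.bin andOp Φ (Ψ σ)) P' →
      SynthRet G sem bsem nsem vtrue vfalse andOp Ψ verify P' (GS.bin andOp Φ (Ψ σ)) R →
      SynthRet G sem bsem nsem vtrue vfalse andOp Ψ verify P Φ R

/-! Induction on the construction judgment. An accepting run of a combined HFTA restricts, once
the child index is stripped from the positions, to an accepting run of each child HFTA; the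
inter-FTA transitions of different levels cannot be confused, because every final state records
the node it belongs to. At the root, a run of `BuildFTA(G, [Q₁, …, Qₘ])` is a derivation in `G`
that computes the value recorded in its state, where each input `xᵢ` has the value recorded in the
root state of the `i`-th child, i.e. the value of the `i`-th argument term. -/

theorem _root_.List.getElem_mem_zip {α β : Type*} {l₁ : List α} {l₂ : List β} {i : ℕ}
    (h₁ : i < l₁.length) (h₂ : i < l₂.length) : (l₁[i], l₂[i]) ∈ l₁.zip l₂ := by
  have hi : i < (l₁.zip l₂).length := by simp [h₁, h₂]
  simpa using List.getElem_mem hi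

theorem _root_.List.forall_mem_zip_iff_getElem {α β : Type*} {l₁ : List α} {l₂ : List β}
    {P : α → β → Prop} (h : l₁.length = l₂.length) :
    (∀ p ∈ l₁.zip l₂, P p.1 p.2) ↔ ∀ i (hi : i < l₁.length), P l₁[i] l₂[i] := by
  constructor
  · exact fun hP i hi => hP _ (List.getElem_mem_zip hi _)
  · intro hP p hp
    obtain ⟨i, hi, rfl⟩ := List.mem_iff_getElem.mp hp
    simpa using hP i (by simp at hi; omega)

section Runs

variable {op val bop Q Q' ν : Type}

theorem RunFrom.of_mapFTA {A : FTA (Alpha op val bop) Q} {g : Q → Q'} {u : Q' → Q}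
    (hu : Function.LeftInverse u g) {lf : ℕ → Q'} {t : Tree (Alpha op val bop)} {q : Q}
    (h : RunFrom (mapFTA g A) lf t (g q)) : RunFrom A (u ∘ lf) t q := by
  generalize hq : g q = q' at h
  induction h generalizing q with
  | node _ ts _ _ htr hvar hlen _ ih =>
    obtain ⟨_, qs, q₀, htr, heq⟩ := htr
    simp only [Prod.mk.injEq] at heq
    obtain ⟨rfl, rfl, rfl⟩ := heq
    obtain rfl : q = q₀ := hu.injective hq
    refine .node _ ts qs q htr (fun i hi => ?_) (by simpa using hlen) fun p hp => ?_
    · simp [← hvar i hi, hu q]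
    · refine ih (p.1, g p.2) ?_ rfl
      rw [List.zip_map_right]
      exact List.mem_map_of_mem hp

variable {G : Grammar op ν} {sem : op → List val → val} {arity : ℕ} {init : ℕ → Set val}

theorem RunFrom.derives_of_buildFTA {lf : ℕ → SymT ν × val} {t : Tree (Alpha op val bop)}
    {q : SymT ν × val} (h : RunFrom (buildFTA bop G sem arity init) lf t q) :
    Derives G q.1 t := by
  induction h with
  | node _ ts _ _ htr _ hlen _ ih =>
    cases htr with
    | input i c =>
      obtain rfl : ts = [] := List.length_eq_zero_iff.mp hlen
      exact .var i
    | prod s o ss cs hprod hss _ =>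
      have hts : ts.length = ss.length := by simpa [hss] using hlen
      refine .prod s o ss ts hprod hts.symm ((List.forall_mem_zip_iff_getElem hts.symm).2 ?_)
      intro j hj
      simpa using (List.forall_mem_zip_iff_getElem (P := fun t q => Derives G q.1 t) hlen).1 ih j
        (by omega)

theorem RunFrom.evalsTo_of_buildFTA (bsem : bop → val → val → val) (nsem : val → val)
    {lf : ℕ → SymT ν × val} {args : ℕ → val}
    (hargs : ∀ i < arity, ∀ c, lf i = (SymT.var i, c) → args i = c)
    {t : Tree (Alpha op val bop)} {q : SymT ν × val}
    (h : RunFrom (buildFTA bop G sem arity init) lf t q) :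
    EvalsTo sem bsem nsem args t q.2 := by
  induction h with
  | node _ ts _ _ htr hvar hlen _ ih =>
    cases htr with
    | input i c hi =>
      obtain rfl : ts = [] := List.length_eq_zero_iff.mp hlen
      rw [← hargs i hi c (hvar i rfl).symm]
      exact .var i
    | prod s o ss cs hprod hss _ =>
      have hts : ts.length = cs.length := by simpa [hss] using hlen
      refine .dsl o ts cs hts ((List.forall_mem_zip_iff_getElem hts).2 ?_)
      intro j hj
      simpa using (List.forall_mem_zip_iff_getElem
        (P := fun t q => EvalsTo sem bsem nsem args t q.2) hlen).1 ih j hj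

end Runs

section Combine

variable {α ν val : Type}

-- Final states of node `v` carry the position `v`: this is what lets an accepting run tell the
-- inter-FTA transitions of different levels of a combined HFTA apart.
structure HFTA.WellFormed (H : HFTA α (TQ ν val)) : Prop where
  root_mem : [] ∈ H.nodes
  mem_of_mem_children : ∀ v ∈ H.nodes, ∀ v' ∈ H.children v, v' ∈ H.nodes
  ne_nil_of_mem_children : ∀ v, ∀ v' ∈ H.children v, v' ≠ []
  fst_eq_of_mem_finals : ∀ v, ∀ q ∈ (H.fta v).finals, q.1 = v

variable (A : FTA α (SymT ν × val)) {Hs : List (HFTA α (TQ ν val))} {i : ℕ}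
  {Hi : HFTA α (TQ ν val)}

theorem combine_fta_cons (hi : Hs[i]? = some Hi) (v : List ℕ) :
    (combine A Hs).fta (i :: v) = mapFTA (tagState i) (Hi.fta v) := by
  simp only [combine, hi]

theorem combine_children_cons (hi : Hs[i]? = some Hi) (v : List ℕ) :
    (combine A Hs).children (i :: v) = (Hi.children v).map (i :: ·) := by
  simp only [combine, hi]

theorem cons_mem_combine_nodes (hi : Hs[i]? = some Hi) {v : List ℕ} (hv : v ∈ Hi.nodes) :
    i :: v ∈ (combine A Hs).nodes :=
  Or.inr ⟨i, Hi, v, hi, hv, rfl⟩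

theorem combine_wellFormed (Hs : List (HFTA α (TQ ν val))) (h : ∀ H ∈ Hs, H.WellFormed) :
    (combine A Hs).WellFormed where
  root_mem := Or.inl rfl
  mem_of_mem_children := by
    rintro (_ | ⟨i, v⟩) hv v' hv'
    · obtain ⟨j, hj, rfl⟩ := List.mem_map.mp hv'
      have hHj : Hs[j]? = some (Hs[j]'(List.mem_range.mp hj)) := List.getElem?_eq_getElem _
      exact cons_mem_combine_nodes A hHj (h _ (List.mem_of_getElem? hHj)).root_mem
    · obtain _ | ⟨i, Hi, v, hi, hv, ⟨⟩⟩ := hv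
      · contradiction
      rw [combine_children_cons A hi] at hv'
      obtain ⟨u, hu, rfl⟩ := List.mem_map.mp hv'
      exact cons_mem_combine_nodes A hi
        ((h _ (List.mem_of_getElem? hi)).mem_of_mem_children v hv u hu)
  ne_nil_of_mem_children := by
    rintro (_ | ⟨i, v⟩) v' hv'
    · obtain ⟨j, -, rfl⟩ := List.mem_map.mp hv'
      simp
    · rcases hi : Hs[i]? with _ | Hi
      · simp [combine, hi] at hv'
      · rw [combine_children_cons A hi] at hv'
        obtain ⟨u, -, rfl⟩ := List.mem_map.mp hv'
        simp
  fst_eq_of_mem_finals := by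
    rintro (_ | ⟨i, v⟩) q hq
    · obtain ⟨q, -, rfl⟩ := hq
      rfl
    · rcases hi : Hs[i]? with _ | Hi
      · simp [combine, hi, emptyFTA] at hq
      · rw [combine_fta_cons A hi] at hq
        obtain ⟨q, hq, rfl⟩ := hq
        simp [tagState, (h _ (List.mem_of_getElem? hi)).fst_eq_of_mem_finals v q hq]

end Combine

theorem BuildsH.wellFormed {op val bop ν F : Type} {gram : F → Grammar op ν}
    {sem : op → List val → val} {bsem : bop → val → val → val} {nsem : val → val}
    {vtrue vfalse : val} {t : GS F val bop} {H : HFTA (Alpha op val bop) (TQ ν val)}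
    (h : BuildsH gram sem bsem nsem vtrue vfalse t H) : H.WellFormed := by
  induction h with
  | cst => exact combine_wellFormed _ _ (by simp)
  | app _ _ _ hlen _ ih =>
    refine combine_wellFormed _ _ fun H hH => ?_
    obtain ⟨j, hj, rfl⟩ := List.mem_iff_getElem.mp hH
    exact (List.forall_mem_zip_iff_getElem (P := fun _ H => H.WellFormed) hlen).1 ih j (by omega)
  | bin _ _ _ _ _ _ _ ih₁ ih₂ => exact combine_wellFormed _ _ (by simp [ih₁, ih₂])
  | neg _ _ _ ih => exact combine_wellFormed _ _ (by simp [ih])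

theorem tagState_inj {ν val : Type} {i j : ℕ} {q q' : TQ ν val} :
    tagState i q = tagState j q' ↔ i = j ∧ q = q' := by
  simp [tagState, Prod.ext_iff, and_assoc]

def untag {ν val : Type} (q : TQ ν val) : TQ ν val := (q.1.tail, q.2)

@[simp]
theorem untag_tagState {ν val : Type} (i : ℕ) (q : TQ ν val) : untag (tagState i q) = q := rfl

-- A left inverse of `(([] : List ℕ), ·)` that sends states off the root to `SymT.start`, so that
-- an input state `xᵢ` read through it is known to be a root state.
def rootInput {ν val : Type} (q : TQ ν val) : SymT ν × val :=
  if q.1 = [] then q.2 else (SymT.start, q.2.2)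

section Accept

variable {op val bop ν : Type} {A : FTA (Alpha op val bop) (SymT ν × val)}
  {Hs : List (HFTA (Alpha op val bop) (TQ ν val))} {T : List ℕ → Tree (Alpha op val bop)}
  {ρ : List ℕ → TQ ν val} {leaf : List ℕ → ℕ → TQ ν val}

theorem HAcceptWith.combine_root (hacc : HAcceptWith (combine A Hs) T ρ leaf) :
    ∃ q ∈ A.finals, ρ [] = ([], q) ∧ RunFrom A (rootInput ∘ leaf []) (T []) q := by
  obtain ⟨⟨q, hq, hρ⟩, hrun, -⟩ := hacc [] (Or.inl rfl)
  refine ⟨q, hq, hρ.symm, ?_⟩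
  rw [← hρ] at hrun
  exact hrun.of_mapFTA fun q => if_pos rfl

theorem HAcceptWith.combine_input_eq (hacc : HAcceptWith (combine A Hs) T ρ leaf) {i j : ℕ}
    (hi : i < Hs.length) {c : val} (h : rootInput (leaf [] i) = (SymT.var j, c)) :
    c = (ρ [i]).2.2 := by
  unfold rootInput at h
  split_ifs at h with hroot
  swap
  · cases h
  have hedge := (hacc [] (Or.inl rfl)).2.2 i [i] (by simp [combine, hi])
  rcases hedge with ⟨i', -, q, q', -, -, heq⟩ | ⟨i', -, q, -, -, heq⟩
  · simp [Prod.ext_iff, tagState, hroot] at heq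
  · obtain ⟨hρ, hleaf⟩ := Prod.mk.inj heq
    rw [hρ, ← (Prod.mk.inj h).2, hleaf]
    rfl

theorem HAcceptWith.combine_child (hacc : HAcceptWith (combine A Hs) T ρ leaf) {i : ℕ}
    {Hi : HFTA (Alpha op val bop) (TQ ν val)} (hi : Hs[i]? = some Hi) (hwf : Hi.WellFormed) :
    HAcceptWith Hi (fun v => T (i :: v)) (fun v => untag (ρ (i :: v)))
      (fun v j => untag (leaf (i :: v) j)) := by
  have final_at : ∀ v ∈ Hi.nodes, ∃ q ∈ (Hi.fta v).finals, ρ (i :: v) = tagState i q ∧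
      RunFrom (mapFTA (tagState i) (Hi.fta v)) (leaf (i :: v)) (T (i :: v)) (tagState i q) := by
    intro v hv
    obtain ⟨hfin, hrun, -⟩ := hacc _ (cons_mem_combine_nodes A hi hv)
    rw [combine_fta_cons A hi] at hfin hrun
    obtain ⟨q, hq, hρ⟩ := hfin
    exact ⟨q, hq, hρ.symm, hρ ▸ hrun⟩
  intro v hv
  obtain ⟨q, hq, hρ, hrun⟩ := final_at v hv
  beta_reduce
  rw [hρ, untag_tagState]
  refine ⟨hq, hrun.of_mapFTA (untag_tagState i), fun j v' hj => ?_⟩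
  have hv' : v' ∈ Hi.children v := List.mem_of_getElem? hj
  obtain ⟨q₀, hq₀, hρ₀, -⟩ := final_at v' (hwf.mem_of_mem_children v hv v' hv')
  have hedge := (hacc _ (cons_mem_combine_nodes A hi hv)).2.2 j (i :: v')
    (by rw [combine_children_cons A hi, List.getElem?_map, hj]; rfl)
  rw [hρ₀] at hedge ⊢
  rcases hedge with ⟨i', Hi', q₁, q₂, hi', hq₁₂, heq⟩ | ⟨i', Hi', q₁, hi', hq₁, heq⟩
  · obtain ⟨h₁, h₂⟩ := Prod.mk.inj heq
    obtain ⟨rfl, rfl⟩ := tagState_inj.mp h₁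
    obtain rfl : Hi' = Hi := Option.some.inj (hi'.symm.trans hi)
    rwa [h₂]
  · obtain ⟨rfl, rfl⟩ := tagState_inj.mp (Prod.mk.inj heq).1
    obtain rfl : Hi' = Hi := Option.some.inj (hi'.symm.trans hi)
    have hroot : v' = [] :=
      (hwf.fst_eq_of_mem_finals v' _ hq₀).symm.trans (hwf.fst_eq_of_mem_finals [] _ hq₁)
    exact absurd hroot (hwf.ne_nil_of_mem_children v v' hv')

end Accept

section Soundness

variable {op val bop ν F : Type} {gram : F → Grammar op ν} {sem : op → List val → val}
  {bsem : bop → val → val → val} {nsem : val → val} {vtrue vfalse : val}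

theorem BuildsH.conformsTo_of_acceptWith {t : GS F val bop}
    {H : HFTA (Alpha op val bop) (TQ ν val)} (hb : BuildsH gram sem bsem nsem vtrue vfalse t H)
    {T : List ℕ → Tree (Alpha op val bop)} {ρ : List ℕ → TQ ν val}
    {leaf : List ℕ → ℕ → TQ ν val} (hacc : HAcceptWith H T ρ leaf) {f : F} {p : List ℕ}
    (hocc : OccursAt t f p) : ConformsTo (gram f) (T p) := by
  induction hb generalizing T ρ leaf p with
  | cst => cases hocc
  | app _ ts Hs hlen hb ih =>
    cases hocc with
    | here =>
      obtain ⟨q, hq, -, hrun⟩ := hacc.combine_root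
      unfold ConformsTo
      rw [← hq.2]
      exact hrun.derives_of_buildFTA
    | app _ _ _ j t p hj hocc =>
      obtain ⟨hjt, rfl⟩ := List.getElem?_eq_some_iff.mp hj
      have hjH : j < Hs.length := hlen ▸ hjt
      have hbj := hb _ (List.getElem_mem_zip hjt hjH)
      exact ih _ (List.getElem_mem_zip hjt hjH)
        (hacc.combine_child (List.getElem?_eq_getElem hjH) hbj.wellFormed) hocc
  | bin _ _ _ _ _ hb₁ hb₂ ih₁ ih₂ =>
    cases hocc with
    | binl _ _ _ _ p hocc => exact ih₁ (hacc.combine_child rfl hb₁.wellFormed) hocc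
    | binr _ _ _ _ p hocc => exact ih₂ (hacc.combine_child rfl hb₂.wellFormed) hocc
  | neg _ _ hb₁ ih =>
    cases hocc with
    | neg _ _ p hocc => exact ih (hacc.combine_child rfl hb₁.wellFormed) hocc

theorem BuildsH.specEval_of_acceptWith [Inhabited val] {t : GS F val bop}
    {H : HFTA (Alpha op val bop) (TQ ν val)} (hb : BuildsH gram sem bsem nsem vtrue vfalse t H)
    (ht : IsTerm t) {T : List ℕ → Tree (Alpha op val bop)} {ρ : List ℕ → TQ ν val}
    {leaf : List ℕ → ℕ → TQ ν val} (hacc : HAcceptWith H T ρ leaf)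
    {I : F → Tree (Alpha op val bop)} (hI : ∀ f p, OccursAt t f p → I f = T p) :
    SpecEval sem bsem nsem I t (ρ []).2.2 := by
  induction hb generalizing T ρ leaf with
  | cst c =>
    obtain ⟨q, rfl, hρ, -⟩ := hacc.combine_root
    rw [hρ]
    exact .cst c
  | app f ts Hs hlen hb ih =>
    obtain ⟨q, -, hρ, hrun⟩ := hacc.combine_root
    let cs := (List.range Hs.length).map fun j => (ρ [j]).2.2
    have hcs : ts.length = cs.length := by simp [cs, hlen]
    refine hρ ▸ .app f ts cs q.2 hcs ((List.forall_mem_zip_iff_getElem hcs).2 fun j hjt => ?_) ?_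
    · have hjH : j < Hs.length := hlen ▸ hjt
      have hbj := hb _ (List.getElem_mem_zip hjt hjH)
      have hts : IsTerm ts[j] := by
        cases ht with
        | app _ _ hts => exact hts _ (List.getElem_mem hjt)
      simpa [cs, untag] using ih _ (List.getElem_mem_zip hjt hjH) hts
        (hacc.combine_child (List.getElem?_eq_getElem hjH) hbj.wellFormed)
        fun f' p hocc => hI f' (j :: p) (.app f f' ts j _ p (List.getElem?_eq_getElem hjt) hocc)
    · rw [hI f [] (.here f ts)]
      refine hrun.evalsTo_of_buildFTA bsem nsem fun i hi c hc => ?_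
      rw [hacc.combine_input_eq (hlen ▸ hi) hc]
      simp [cs, List.getD_eq_getElem?_getD, hlen ▸ hi]
  | bin => cases ht
  | neg => cases ht

end Soundness

theorem hfta_term_soundness_general
    {op val bop ν F F₀ : Type} [Inhabited val]
    (G : F₀ → Grammar op ν) (Minv : F → F₀)
    (sem : op → List val → val) (bsem : bop → val → val → val) (nsem : val → val)
    (vtrue vfalse : val)
    (t : GS F val bop) (H : HFTA (Alpha op val bop) (TQ ν val))
    (hterm : IsTerm t)
    (hbuild : BuildsH (fun f => G (Minv f)) sem bsem nsem vtrue vfalse t H)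
    (T : List ℕ → Tree (Alpha op val bop))
    (ρ : List ℕ → TQ ν val) (leaf : List ℕ → ℕ → TQ ν val)
    (hacc : HAcceptWith H T ρ leaf) :
    (∀ (f : F) (p : List ℕ), OccursAt t f p → ConformsTo (G (Minv f)) (T p)) ∧
    (∀ I : F → Tree (Alpha op val bop),
        (∀ (f : F) (p : List ℕ), OccursAt t f p → I f = T p) →
        SpecEval sem bsem nsem I t (ρ []).2.2) :=
  ⟨fun _ _ => hbuild.conformsTo_of_acceptWith hacc,
    fun _ => hbuild.specEval_of_acceptWith hterm hacc⟩

/-- Soundness of HFTA construction on terms (Lemma A.2). -/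
theorem hfta_term_soundness
    {op val bop ν F F₀ : Type} [Inhabited val]
    (G : F₀ → Grammar op ν) (Minv : F → F₀)
    (sem : op → List val → val) (bsem : bop → val → val → val) (nsem : val → val)
    (vtrue vfalse : val)
    (t : GS F val bop) (H : HFTA (Alpha op val bop) (TQ ν val))
    (hterm : IsTerm t) (honce : OccursOnce t)
    (hbuild : BuildsH (fun f => G (Minv f)) sem bsem nsem vtrue vfalse t H)
    (T : List ℕ → Tree (Alpha op val bop))
    (ρ : List ℕ → TQ ν val) (leaf : List ℕ → ℕ → TQ ν val)
    (hacc : HAcceptWith H T ρ leaf) :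
    (∀ (f : F) (p : List ℕ), OccursAt t f p → ConformsTo (G (Minv f)) (T p)) ∧
    (∀ I : F → Tree (Alpha op val bop),
        (∀ (f : F) (p : List ℕ), OccursAt t f p → I f = T p) →
        SpecEval sem bsem nsem I t (ρ []).2.2) :=
  hfta_term_soundness_general G Minv sem bsem nsem vtrue vfalse t H hterm hbuild T ρ leaf hacc

end Relish
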